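/- Let p, q ∈ [0, 1/4] and let n ≥ 16 be a natural number. Set μ := np and λ := nq. Suppose X, X' ~ Poisson(μ) and Y, Y' ~ Poisson(λ) are mutually independent. Then Δ := E[|X−Y| + |X'−Y'| − |X−X'| − |Y−Y'|] ≥ min( (1/20)·(μ−λ)², (1/5)·|μ−λ|, (1/7)·(μ−λ)²/√(μ+λ) ). -/

import Mathlib

open MeasureTheory ProbabilityTheory

/-- The Poisson distribution with mean `m ≥ 0`, as a measure on `ℝ` supported on `ℕ`. -/
noncomputable def poissonRealMeasure (m : ℝ) : Measure ℝ :=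
  Measure.sum fun k : ℕ =>
    ENNReal.ofReal (Real.exp (-m) * m ^ k / (Nat.factorial k : ℝ)) • Measure.dirac (k : ℝ)

/-!
Write `F_t` for the distribution function of `Poisson(t)`. For integers `j, k` the distance
`|j - k|` counts the levels `m` with `min j k ≤ m < max j k`, so for independent `ℕ`-valued
`Z, W` with distribution functions `F_Z, F_W`
`E|Z - W| = ∑ₘ (F_Z(m) (1 - F_W(m)) + F_W(m) (1 - F_Z(m)))`, and the four terms of `Δ`
combine to `Δ = 2 ∑ₘ (F_μ(m) - F_λ(m))²`.

Since `∂ₜ F_t(m) = -P(Poisson(t) = m)`, the differences `F_l(m) - F_u(m)` add up, over any window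
`S` of levels carrying Poisson mass at least `21/25` for every `t ∈ [l, u]`, to at least
`(21/25)(u - l)`. Chebyshev's inequality provides such a window of length about
`(u - l) + (5/2)(√u + √l)`, and Cauchy–Schwarz on `S` gives
`(441/625)(u - l)² ≤ |S| ∑ₘ (F_l(m) - F_u(m))²`. Comparing `|S|` with `u - l` and `√(u + l)`
yields the three regimes of the bound.
-/

open Real Set
open scoped Nat ENNReal

noncomputable def poissonWeight (t : ℝ) (k : ℕ) : ℝ := exp (-t) * t ^ k / k !

noncomputable def poissonCDF (t : ℝ) (m : ℕ) : ℝ :=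
  ∑ k ∈ Finset.range (m + 1), poissonWeight t k

section PoissonWeight

variable {t : ℝ}

lemma poissonWeight_nonneg (ht : 0 ≤ t) (k : ℕ) : 0 ≤ poissonWeight t k := by
  unfold poissonWeight; positivity

lemma hasSum_poissonWeight (ht : 0 ≤ t) : HasSum (poissonWeight t) 1 :=
  hasSum_one_poissonMeasure ⟨t, ht⟩

lemma succ_mul_poissonWeight_succ (t : ℝ) (k : ℕ) :
    ((k : ℝ) + 1) * poissonWeight t (k + 1) = t * poissonWeight t k := by
  unfold poissonWeight
  rw [Nat.factorial_succ, Nat.cast_mul, pow_succ]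
  field_simp
  push_cast
  ring

lemma hasSum_mul_poissonWeight (ht : 0 ≤ t) :
    HasSum (fun k : ℕ => k * poissonWeight t k) t := by
  rw [← hasSum_nat_add_iff' 1]
  simpa [succ_mul_poissonWeight_succ] using (hasSum_poissonWeight ht).mul_left t

lemma hasSum_sq_mul_poissonWeight (ht : 0 ≤ t) :
    HasSum (fun k : ℕ => (k : ℝ) ^ 2 * poissonWeight t k) (t ^ 2 + t) := by
  rw [← hasSum_nat_add_iff' 1]
  have h := ((hasSum_mul_poissonWeight ht).add (hasSum_poissonWeight ht)).mul_left t
  rw [mul_add, mul_one, ← sq] at h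
  simp only [Finset.sum_range_one, Nat.cast_zero, zero_pow two_ne_zero, zero_mul, sub_zero]
  refine h.congr_fun fun k => ?_
  push_cast
  linear_combination ((k : ℝ) + 1) * succ_mul_poissonWeight_succ t k

lemma hasSum_sq_sub_mul_poissonWeight (ht : 0 ≤ t) :
    HasSum (fun k : ℕ => ((k : ℝ) - t) ^ 2 * poissonWeight t k) t := by
  have h := ((hasSum_sq_mul_poissonWeight ht).sub
    ((hasSum_mul_poissonWeight ht).mul_left (2 * t))).add
    ((hasSum_poissonWeight ht).mul_left (t ^ 2))
  rw [show t ^ 2 + t - 2 * t * t + t ^ 2 * 1 = t by ring] at h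
  exact h.congr_fun fun k => by ring

lemma hasDerivAt_poissonWeight_succ (t : ℝ) (k : ℕ) :
    HasDerivAt (poissonWeight · (k + 1)) (poissonWeight t k - poissonWeight t (k + 1)) t := by
  refine (((hasDerivAt_neg t).exp.mul (hasDerivAt_pow (k + 1) t)).div_const
    ((k + 1)! : ℝ)).congr_deriv ?_
  unfold poissonWeight
  rw [Nat.factorial_succ, Nat.cast_mul, pow_succ]
  field_simp
  push_cast
  ring

lemma hasDerivAt_poissonCDF (t : ℝ) (m : ℕ) :
    HasDerivAt (poissonCDF · m) (-poissonWeight t m) t := by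
  induction m with
  | zero => simpa [poissonCDF, poissonWeight] using (hasDerivAt_neg t).exp
  | succ m ih =>
    have h : (poissonCDF · (m + 1)) = fun s => poissonCDF s m + poissonWeight s (m + 1) :=
      funext fun s => Finset.sum_range_succ _ _
    rw [h]
    exact (ih.add (hasDerivAt_poissonWeight_succ t m)).congr_deriv (by ring)

end PoissonWeight

section PoissonRealMeasure

variable {t : ℝ}

lemma poissonRealMeasure_eq_map (ht : 0 ≤ t) :
    poissonRealMeasure t = (poissonMeasure t.toNNReal).map (Nat.cast : ℕ → ℝ) := by
  rw [poissonMeasure.eq_1, Measure.map_sum measurable_from_nat.aemeasurable]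
  simp [poissonRealMeasure, Measure.map_smul, Measure.map_dirac, ht]

lemma integrable_id_poissonRealMeasure (ht : 0 ≤ t) : Integrable id (poissonRealMeasure t) := by
  rw [poissonRealMeasure_eq_map ht,
    integrable_map_measure aestronglyMeasurable_id measurable_from_nat.aemeasurable,
    integrable_poissonMeasure_iff]
  refine (hasSum_mul_poissonWeight ht).summable.congr fun k => ?_
  simp [poissonWeight, ht]
  ring

lemma ae_mem_range_natCast_poissonRealMeasure (t : ℝ) :
    ∀ᵐ x ∂poissonRealMeasure t, x ∈ range (Nat.cast : ℕ → ℝ) := by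
  rw [poissonRealMeasure, Measure.ae_sum_iff]
  exact fun k => Measure.ae_smul_measure (by simp [ae_dirac_eq]) _

lemma poissonRealMeasure_real_Iic (ht : 0 ≤ t) (m : ℕ) :
    (poissonRealMeasure t).real (Iic (m : ℝ)) = poissonCDF t m := by
  rw [poissonRealMeasure_eq_map ht, map_measureReal_apply measurable_from_nat measurableSet_Iic]
  have : (Nat.cast ⁻¹' Iic (m : ℝ) : Set ℕ) = ↑(Finset.range (m + 1)) := by
    ext k; simp
  rw [this, poissonCDF, ← sum_measureReal_singleton]
  simp [poissonMeasure_real_singleton, poissonWeight, ht]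

variable {Ω : Type*} [MeasurableSpace Ω] {μ : Measure Ω} {Z : Ω → ℝ}

lemma integrable_of_map_eq_poissonRealMeasure (hZ : AEMeasurable Z μ) (ht : 0 ≤ t)
    (h : μ.map Z = poissonRealMeasure t) : Integrable Z μ :=
  (integrable_map_measure aestronglyMeasurable_id hZ).1 (h ▸ integrable_id_poissonRealMeasure ht)

lemma ae_mem_range_natCast_of_map_eq_poissonRealMeasure (hZ : AEMeasurable Z μ)
    (h : μ.map Z = poissonRealMeasure t) : ∀ᵐ ω ∂μ, Z ω ∈ range (Nat.cast : ℕ → ℝ) :=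
  ae_of_ae_map hZ (h ▸ ae_mem_range_natCast_poissonRealMeasure t)

lemma measureReal_preimage_Iic_of_map_eq_poissonRealMeasure (hZ : Measurable Z) (ht : 0 ≤ t)
    (h : μ.map Z = poissonRealMeasure t) (m : ℕ) :
    μ.real (Z ⁻¹' Iic (m : ℝ)) = poissonCDF t m := by
  rw [← map_measureReal_apply hZ measurableSet_Iic, h, poissonRealMeasure_real_Iic ht]

end PoissonRealMeasure

section EnergyIdentity

lemma tsum_ite_le_lt_or_le_lt (j k : ℕ) :
    ∑' m : ℕ, (if (j ≤ m ∧ m < k) ∨ (k ≤ m ∧ m < j) then (1 : ℝ≥0∞) else 0) =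
      ENNReal.ofReal |(j : ℝ) - k| := by
  have hIco : ∀ m, (j ≤ m ∧ m < k) ∨ (k ≤ m ∧ m < j) ↔ m ∈ Finset.Ico (min j k) (max j k) := by
    intro m; rw [Finset.mem_Ico]; omega
  simp_rw [hIco]
  rw [tsum_eq_sum (s := Finset.Ico (min j k) (max j k)) fun m hm => if_neg hm,
    Finset.sum_boole, Finset.filter_mem_eq_inter, Finset.inter_self, Nat.card_Ico,
    ← ENNReal.ofReal_natCast, Nat.cast_sub min_le_max, Nat.cast_max, Nat.cast_min,
    max_sub_min_eq_abs']

variable {Ω : Type*} [MeasurableSpace Ω] {μ : Measure Ω} [IsProbabilityMeasure μ]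
  {Z W : Ω → ℝ}

lemma measureReal_preimage_Iic_inter_preimage_Ioi (hW : Measurable W) (hZW : IndepFun Z W μ)
    (x : ℝ) :
    μ.real (Z ⁻¹' Iic x ∩ W ⁻¹' Ioi x) = μ.real (Z ⁻¹' Iic x) * (1 - μ.real (W ⁻¹' Iic x)) := by
  rw [measureReal_def, hZW.measure_inter_preimage_eq_mul _ _ measurableSet_Iic measurableSet_Ioi,
    ENNReal.toReal_mul, ← compl_Iic, preimage_compl, ← measureReal_def, ← measureReal_def,
    probReal_compl_eq_one_sub (hW measurableSet_Iic)]

lemma hasSum_integral_abs_sub (hZ : Measurable Z) (hW : Measurable W) (hZW : IndepFun Z W μ)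
    (hZℕ : ∀ᵐ ω ∂μ, Z ω ∈ range (Nat.cast : ℕ → ℝ))
    (hWℕ : ∀ᵐ ω ∂μ, W ω ∈ range (Nat.cast : ℕ → ℝ))
    (hZi : Integrable Z μ) (hWi : Integrable W μ) :
    HasSum (fun m : ℕ => μ.real (Z ⁻¹' Iic (m : ℝ)) * (1 - μ.real (W ⁻¹' Iic (m : ℝ))) +
        μ.real (W ⁻¹' Iic (m : ℝ)) * (1 - μ.real (Z ⁻¹' Iic (m : ℝ))))
      (∫ ω, |Z ω - W ω| ∂μ) := by
  set E : ℕ → Set Ω := fun m =>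
    (Z ⁻¹' Iic (m : ℝ) ∩ W ⁻¹' Ioi (m : ℝ)) ∪ (W ⁻¹' Iic (m : ℝ) ∩ Z ⁻¹' Ioi (m : ℝ))
  have hE : ∀ m, MeasurableSet (E m) := fun m =>
    ((hZ measurableSet_Iic).inter (hW measurableSet_Ioi)).union
      ((hW measurableSet_Iic).inter (hZ measurableSet_Ioi))
  have hcount : ∀ᵐ ω ∂μ, ENNReal.ofReal |Z ω - W ω| = ∑' m, (E m).indicator 1 ω := by
    filter_upwards [hZℕ, hWℕ] with ω ⟨j, hj⟩ ⟨k, hk⟩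
    rw [← hj, ← hk, ← tsum_ite_le_lt_or_le_lt]
    congr! 2 with m
    simp [E, Set.indicator, ← hj, ← hk]
  have hlintegral : ∫⁻ ω, ENNReal.ofReal |Z ω - W ω| ∂μ = ∑' m, μ (E m) := by
    rw [lintegral_congr_ae hcount,
      lintegral_tsum fun m => (measurable_one.indicator (hE m)).aemeasurable]
    simp only [lintegral_indicator_one (hE _)]
  have hfin : ∑' m, μ (E m) ≠ ∞ := hlintegral ▸ (hZi.sub hWi).abs.lintegral_lt_top.ne
  have hE_real : ∀ m : ℕ, μ.real (E m) = μ.real (Z ⁻¹' Iic (m : ℝ)) *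
      (1 - μ.real (W ⁻¹' Iic (m : ℝ))) + μ.real (W ⁻¹' Iic (m : ℝ)) *
      (1 - μ.real (Z ⁻¹' Iic (m : ℝ))) := by
    intro m
    rw [measureReal_union _ ((hW measurableSet_Iic).inter (hZ measurableSet_Ioi)),
      measureReal_preimage_Iic_inter_preimage_Ioi hW hZW,
      measureReal_preimage_Iic_inter_preimage_Ioi hZ hZW.symm]
    exact Set.disjoint_left.2 fun ω h₁ h₂ =>
      not_le.2 (mem_preimage.1 h₂.2) (mem_preimage.1 h₁.1)
  rw [integral_eq_lintegral_of_nonneg_ae (f := fun ω => |Z ω - W ω|)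
    (ae_of_all _ fun ω => abs_nonneg _) (by fun_prop), hlintegral,
    ENNReal.tsum_toReal_eq fun m => measure_ne_top _ _]
  exact (ENNReal.hasSum_toReal hfin).congr_fun fun m => (hE_real m).symm

lemma hasSum_integral_abs_sub_of_poisson {s t : ℝ} (hs : 0 ≤ s) (ht : 0 ≤ t)
    (hZ : Measurable Z) (hW : Measurable W) (hZW : IndepFun Z W μ)
    (hZs : μ.map Z = poissonRealMeasure s) (hWt : μ.map W = poissonRealMeasure t) :
    HasSum (fun m : ℕ => poissonCDF s m * (1 - poissonCDF t m) +
        poissonCDF t m * (1 - poissonCDF s m)) (∫ ω, |Z ω - W ω| ∂μ) := by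
  simpa only [measureReal_preimage_Iic_of_map_eq_poissonRealMeasure hZ hs hZs,
    measureReal_preimage_Iic_of_map_eq_poissonRealMeasure hW ht hWt] using
    hasSum_integral_abs_sub hZ hW hZW
      (ae_mem_range_natCast_of_map_eq_poissonRealMeasure hZ.aemeasurable hZs)
      (ae_mem_range_natCast_of_map_eq_poissonRealMeasure hW.aemeasurable hWt)
      (integrable_of_map_eq_poissonRealMeasure hZ.aemeasurable hs hZs)
      (integrable_of_map_eq_poissonRealMeasure hW.aemeasurable ht hWt)

lemma hasSum_integral_energy_gap_of_poisson {X X' Y Y' : Ω → ℝ} {a b : ℝ} (ha : 0 ≤ a)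
    (hb : 0 ≤ b) (hXm : Measurable X) (hX'm : Measurable X') (hYm : Measurable Y)
    (hY'm : Measurable Y') (hindep : iIndepFun ![X, X', Y, Y'] μ)
    (hX : μ.map X = poissonRealMeasure a) (hX' : μ.map X' = poissonRealMeasure a)
    (hY : μ.map Y = poissonRealMeasure b) (hY' : μ.map Y' = poissonRealMeasure b) :
    HasSum (fun m : ℕ => 2 * (poissonCDF a m - poissonCDF b m) ^ 2)
      (∫ ω, (|X ω - Y ω| + |X' ω - Y' ω| - |X ω - X' ω| - |Y ω - Y' ω|) ∂μ) := by
  have hXY := hasSum_integral_abs_sub_of_poisson ha hb hXm hYm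
    (hindep.indepFun (show (0 : Fin 4) ≠ 2 by decide)) hX hY
  have hX'Y' := hasSum_integral_abs_sub_of_poisson ha hb hX'm hY'm
    (hindep.indepFun (show (1 : Fin 4) ≠ 3 by decide)) hX' hY'
  have hXX' := hasSum_integral_abs_sub_of_poisson ha ha hXm hX'm
    (hindep.indepFun (show (0 : Fin 4) ≠ 1 by decide)) hX hX'
  have hYY' := hasSum_integral_abs_sub_of_poisson hb hb hYm hY'm
    (hindep.indepFun (show (2 : Fin 4) ≠ 3 by decide)) hY hY'
  have iX := integrable_of_map_eq_poissonRealMeasure hXm.aemeasurable ha hX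
  have iX' := integrable_of_map_eq_poissonRealMeasure hX'm.aemeasurable ha hX'
  have iY := integrable_of_map_eq_poissonRealMeasure hYm.aemeasurable hb hY
  have iY' := integrable_of_map_eq_poissonRealMeasure hY'm.aemeasurable hb hY'
  have iabs : ∀ {Z W : Ω → ℝ}, Integrable Z μ → Integrable W μ →
      Integrable (fun ω => |Z ω - W ω|) μ := fun hZ hW => (hZ.sub hW).abs
  have i12 : Integrable (fun ω => |X ω - Y ω| + |X' ω - Y' ω|) μ :=
    (iabs iX iY).add (iabs iX' iY')
  have i123 : Integrable (fun ω => |X ω - Y ω| + |X' ω - Y' ω| - |X ω - X' ω|) μ :=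
    i12.sub (iabs iX iX')
  rw [integral_sub i123 (iabs iY iY'), integral_sub i12 (iabs iX iX'),
    integral_add (iabs iX iY) (iabs iX' iY')]
  exact (((hXY.add hX'Y').sub hXX').sub hYY').congr_fun fun m => by ring

end EnergyIdentity

section LowerBound

lemma mul_sub_le_sum_poissonCDF_sub {l u c : ℝ} (S : Finset ℕ) (hlu : l ≤ u)
    (h : ∀ t ∈ Ioo l u, c ≤ ∑ m ∈ S, poissonWeight t m) :
    c * (u - l) ≤ ∑ m ∈ S, (poissonCDF l m - poissonCDF u m) := by
  rcases hlu.eq_or_lt with rfl | hlt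
  · simp
  have hG : ∀ t, HasDerivAt (fun s => ∑ m ∈ S, poissonCDF s m)
      (∑ m ∈ S, -poissonWeight t m) t :=
    fun t => HasDerivAt.fun_sum fun m _ => hasDerivAt_poissonCDF t m
  obtain ⟨τ, hτ, hslope⟩ := exists_hasDerivAt_eq_slope _ _ hlt
    (fun t _ => (hG t).continuousAt.continuousWithinAt) fun t _ => hG t
  rw [Finset.sum_neg_distrib, eq_div_iff (sub_pos.2 hlt).ne'] at hslope
  rw [Finset.sum_sub_distrib]
  nlinarith [h τ hτ]

lemma one_sub_div_le_sum_of_hasSum_sq_sub {p : ℕ → ℝ} {t v c : ℝ} (hp : ∀ k, 0 ≤ p k)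
    (h1 : HasSum p 1) (hv : HasSum (fun k : ℕ => ((k : ℝ) - t) ^ 2 * p k) v) (hc : 0 < c)
    (S : Finset ℕ) (hS : ∀ k ∉ S, c ≤ ((k : ℝ) - t) ^ 2) :
    1 - v / c ≤ ∑ k ∈ S, p k := by
  have hpS : HasSum (fun k => if k ∈ S then p k else 0) (∑ k ∈ S, p k) := by
    simpa using hasSum_sum_of_ne_finset_zero (s := S)
      (f := fun k => if k ∈ S then p k else 0) fun k hk => if_neg hk
  have hle : ∀ k, p k ≤ (if k ∈ S then p k else 0) + ((k : ℝ) - t) ^ 2 * p k / c := by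
    intro k
    by_cases hk : k ∈ S
    · rw [if_pos hk]
      have := hp k
      exact le_add_of_nonneg_right (by positivity)
    · rw [if_neg hk, zero_add, le_div_iff₀ hc]
      exact mul_comm (p k) _ ▸ mul_le_mul_of_nonneg_left (hS k hk) (hp k)
  have := hasSum_le hle h1 (hpS.add (hv.div_const c))
  linarith

noncomputable def poissonWindow (l u : ℝ) : Finset ℕ :=
  Finset.Icc ⌈l - 5 / 2 * √l⌉₊ ⌊u + 5 / 2 * √u⌋₊

lemma card_poissonWindow_le {l u : ℝ} (hl : 0 ≤ l) (hlu : l ≤ u) :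
    ((poissonWindow l u).card : ℝ) ≤ (u - l) + 5 / 2 * (√u + √l) + 1 := by
  have hM : (⌊u + 5 / 2 * √u⌋₊ : ℝ) ≤ u + 5 / 2 * √u :=
    Nat.floor_le (add_nonneg (hl.trans hlu) (by positivity))
  have hJ : l - 5 / 2 * √l ≤ ⌈l - 5 / 2 * √l⌉₊ := Nat.le_ceil _
  rw [poissonWindow, Nat.card_Icc]
  rcases le_total ⌈l - 5 / 2 * √l⌉₊ (⌊u + 5 / 2 * √u⌋₊ + 1) with h | h
  · rw [Nat.cast_sub h]
    push_cast
    linarith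
  · rw [Nat.sub_eq_zero_of_le h, Nat.cast_zero]
    positivity

lemma le_sq_sub_of_notMem_poissonWindow {l u t : ℝ} {k : ℕ} (hl : 0 ≤ l) (ht : t ∈ Icc l u)
    (hk : k ∉ poissonWindow l u) : 25 / 4 * t ≤ ((k : ℝ) - t) ^ 2 := by
  have ht0 : 0 ≤ t := hl.trans ht.1
  suffices 5 / 2 * √t ≤ |(k : ℝ) - t| by
    have := pow_le_pow_left₀ (by positivity) this 2
    rw [sq_abs, mul_pow, Real.sq_sqrt ht0] at this
    norm_num at this
    exact this
  have hst : √l ≤ √t := Real.sqrt_le_sqrt ht.1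
  have hsu : √t ≤ √u := Real.sqrt_le_sqrt ht.2
  rw [poissonWindow, Finset.mem_Icc, not_and_or, not_le, not_le] at hk
  rcases hk with hk | hk
  · have hkl : (k : ℝ) < l - 5 / 2 * √l := Nat.lt_ceil.1 hk
    have hl5 : 5 / 2 ≤ √l := by
      nlinarith [Real.sq_sqrt hl, Real.sqrt_nonneg l, Nat.cast_nonneg (α := ℝ) k]
    -- `s ↦ s - 5/2 √s` is increasing where `√s ≥ 5/4`
    have hmono : l - 5 / 2 * √l ≤ t - 5 / 2 * √t := by
      nlinarith [Real.sq_sqrt hl, Real.sq_sqrt ht0, mul_nonneg (sub_nonneg.2 hst)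
        (by linarith : (0 : ℝ) ≤ √t + √l - 5 / 2)]
    rw [abs_sub_comm, abs_of_pos (by linarith)]
    linarith
  · have hku : u + 5 / 2 * √u < k := (Nat.floor_lt (add_nonneg (hl.trans (ht.1.trans ht.2))
      (by positivity))).1 hk
    rw [abs_of_pos (by linarith [Real.sqrt_nonneg t, ht.2])]
    linarith [ht.2]

lemma sum_poissonWindow_poissonWeight_ge {l u t : ℝ} (hl : 0 ≤ l) (ht : t ∈ Icc l u)
    (ht0 : 0 < t) : 21 / 25 ≤ ∑ k ∈ poissonWindow l u, poissonWeight t k := by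
  have := one_sub_div_le_sum_of_hasSum_sq_sub (poissonWeight_nonneg ht0.le)
    (hasSum_poissonWeight ht0.le) (hasSum_sq_sub_mul_poissonWeight ht0.le)
    (by positivity : 0 < 25 / 4 * t) _ fun k hk => le_sq_sub_of_notMem_poissonWindow hl ht hk
  rw [div_mul_cancel_right₀ ht0.ne'] at this
  norm_num at this
  exact this

lemma sq_le_mul_tsum_sq_poissonCDF_sub {l u : ℝ} (hl : 0 ≤ l) (hlu : l ≤ u)
    (hs : Summable fun m => (poissonCDF l m - poissonCDF u m) ^ 2) :
    441 / 625 * (u - l) ^ 2 ≤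
      ((u - l) + 5 / 2 * (√u + √l) + 1) * ∑' m, (poissonCDF l m - poissonCDF u m) ^ 2 := by
  set S := poissonWindow l u
  have hS : 21 / 25 * (u - l) ≤ ∑ m ∈ S, (poissonCDF l m - poissonCDF u m) :=
    mul_sub_le_sum_poissonCDF_sub S hlu fun t ht =>
      sum_poissonWindow_poissonWeight_ge hl (Ioo_subset_Icc_self ht) (hl.trans_lt ht.1)
  calc 441 / 625 * (u - l) ^ 2 = (21 / 25 * (u - l)) ^ 2 := by ring
    _ ≤ (∑ m ∈ S, (poissonCDF l m - poissonCDF u m)) ^ 2 :=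
      pow_le_pow_left₀ (by linarith) hS 2
    _ ≤ S.card * ∑ m ∈ S, (poissonCDF l m - poissonCDF u m) ^ 2 := sq_sum_le_card_mul_sum_sq
    _ ≤ _ := mul_le_mul (card_poissonWindow_le hl hlu)
      (hs.sum_le_tsum S fun _ _ => sq_nonneg _) (Finset.sum_nonneg fun _ _ => sq_nonneg _)
      (by positivity)

lemma min_le_two_mul_of_sq_le_mul {l u T : ℝ} (hl : 0 ≤ l) (hlu : l ≤ u) (hT : 0 ≤ T)
    (h : 441 / 625 * (u - l) ^ 2 ≤ ((u - l) + 5 / 2 * (√u + √l) + 1) * T) :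
    min (1 / 20 * (u - l) ^ 2) (min (1 / 5 * (u - l)) (1 / 7 * (u - l) ^ 2 / √(u + l)))
      ≤ 2 * T := by
  have hu : 0 ≤ u := hl.trans hlu
  set δ := u - l
  set s := √(u + l)
  have hs2 : s ^ 2 = u + l := Real.sq_sqrt (by positivity)
  -- `√u + √l ≤ √2 · √(u + l)` and `√2 < 17/12`
  have hw : √u + √l ≤ 17 / 12 * s := by
    nlinarith [sq_nonneg (√u - √l), Real.sq_sqrt hl, Real.sq_sqrt hu, Real.sqrt_nonneg u,
      Real.sqrt_nonneg l, Real.sqrt_nonneg (u + l)]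
  have hB : 441 / 625 * δ ^ 2 ≤ (δ + 85 / 24 * s + 1) * T :=
    h.trans (mul_le_mul_of_nonneg_right (by linarith) hT)
  rcases le_or_gt (δ + 85 / 24 * s + 1) (2 * δ) with hδB | hδB
  · refine (min_le_right _ _).trans ((min_le_left _ _).trans ?_)
    nlinarith [mul_le_mul_of_nonneg_right hδB hT]
  rcases le_or_gt 1 s with hs1 | hs1
  · refine (min_le_right _ _).trans ((min_le_right _ _).trans ?_)
    rw [div_le_iff₀ (by linarith)]
    nlinarith [mul_le_mul_of_nonneg_right (by linarith : δ + 85 / 24 * s + 1 ≤ 109 / 12 * s) hT]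
  · refine (min_le_left _ _).trans ?_
    nlinarith [mul_le_mul_of_nonneg_right (by nlinarith : δ + 85 / 24 * s + 1 ≤ 6) hT]

theorem min_le_of_hasSum_two_mul_sq_poissonCDF_sub {a b D : ℝ} (ha : 0 ≤ a) (hb : 0 ≤ b)
    (hD : HasSum (fun m => 2 * (poissonCDF a m - poissonCDF b m) ^ 2) D) :
    min (1 / 20 * (a - b) ^ 2) (min (1 / 5 * |a - b|) (1 / 7 * (a - b) ^ 2 / √(a + b))) ≤ D := by
  wlog hab : a ≤ b generalizing a b
  · have := this hb ha (hD.congr_fun fun m => by ring) (le_of_not_ge hab)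
    rwa [abs_sub_comm, add_comm, ← neg_sub a, neg_sq] at this
  have hs := (summable_mul_left_iff two_ne_zero).1 hD.summable
  rw [abs_of_nonpos (sub_nonpos.2 hab), neg_sub, ← neg_sub b, neg_sq, add_comm, ← hD.tsum_eq,
    tsum_mul_left]
  exact min_le_two_mul_of_sq_le_mul ha hab (tsum_nonneg fun _ => sq_nonneg _)
    (sq_le_mul_tsum_sq_poissonCDF_sub ha hab hs)

end LowerBound

theorem poisson_expectation_gap_general {Ω : Type*} [MeasurableSpace Ω] (μ : Measure Ω)
    [IsProbabilityMeasure μ]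
    (p q : ℝ) (hp : p ∈ Set.Icc (0 : ℝ) (1/4)) (hq : q ∈ Set.Icc (0 : ℝ) (1/4))
    (n : ℕ)
    (X X' Y Y' : Ω → ℝ)
    (hXm : Measurable X) (hX'm : Measurable X') (hYm : Measurable Y) (hY'm : Measurable Y')
    (hindep : iIndepFun ![X, X', Y, Y'] μ)
    (hX : Measure.map X μ = poissonRealMeasure (n * p))
    (hX' : Measure.map X' μ = poissonRealMeasure (n * p))
    (hY : Measure.map Y μ = poissonRealMeasure (n * q))
    (hY' : Measure.map Y' μ = poissonRealMeasure (n * q)) :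
    ∫ ω, (|X ω - Y ω| + |X' ω - Y' ω| - |X ω - X' ω| - |Y ω - Y' ω|) ∂μ ≥
      min ((1/20) * (n * p - n * q) ^ 2)
        (min ((1/5) * |n * p - n * q|)
          ((1/7) * (n * p - n * q) ^ 2 / Real.sqrt (n * p + n * q))) := by
  have ha : 0 ≤ (n : ℝ) * p := mul_nonneg n.cast_nonneg hp.1
  have hb : 0 ≤ (n : ℝ) * q := mul_nonneg n.cast_nonneg hq.1
  exact min_le_of_hasSum_two_mul_sq_poissonCDF_sub ha hb
    (hasSum_integral_energy_gap_of_poisson ha hb hXm hX'm hYm hY'm hindep hX hX' hY hY')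

/-- Expectation gap in the Poissonized setting: if `p, q ∈ [0,1/4]`, `n ≥ 16`,
`μ := np`, `λ := nq`, and `X, X' ~ Poisson(μ)`, `Y, Y' ~ Poisson(λ)` are mutually independent,
then `E[|X−Y| + |X'−Y'| − |X−X'| − |Y−Y'|] ≥
  min((1/20)(μ−λ)², (1/5)|μ−λ|, (1/7)(μ−λ)²/√(μ+λ))`. -/
theorem poisson_expectation_gap {Ω : Type*} [MeasurableSpace Ω] (μ : Measure Ω)
    [IsProbabilityMeasure μ]
    (p q : ℝ) (hp : p ∈ Set.Icc (0 : ℝ) (1/4)) (hq : q ∈ Set.Icc (0 : ℝ) (1/4))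
    (n : ℕ) (hn : 16 ≤ n)
    (X X' Y Y' : Ω → ℝ)
    (hXm : Measurable X) (hX'm : Measurable X') (hYm : Measurable Y) (hY'm : Measurable Y')
    (hindep : iIndepFun ![X, X', Y, Y'] μ)
    (hX : Measure.map X μ = poissonRealMeasure (n * p))
    (hX' : Measure.map X' μ = poissonRealMeasure (n * p))
    (hY : Measure.map Y μ = poissonRealMeasure (n * q))
    (hY' : Measure.map Y' μ = poissonRealMeasure (n * q)) :
    ∫ ω, (|X ω - Y ω| + |X' ω - Y' ω| - |X ω - X' ω| - |Y ω - Y' ω|) ∂μ ≥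
      min ((1/20) * (n * p - n * q) ^ 2)
        (min ((1/5) * |n * p - n * q|)
          ((1/7) * (n * p - n * q) ^ 2 / Real.sqrt (n * p + n * q))) :=
  poisson_expectation_gap_general μ p q hp hq n X X' Y Y' hXm hX'm hYm hY'm hindep hX hX' hY hY'
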